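/- arXiv:2210.08805 — 2 statements merged into one kernel-verified Lean document; each statement's English description precedes it below -/
import Mathlib

section
/- Let X be a Banach sequence space. Then every closed sublattice of X is the closed linear span of a (finite or infinite) disjoint sequence of positive vectors, and conversely every such closed span is a closed sublattice. -/
/-!
Everything is read off coordinates: the coordinate functionals are lattice homomorphisms and,
the norm being solid, `‖x‖ ≤ ‖y‖` whenever `|c i x| ≤ |c i y|` for all `i`. In particular a
vector vanishing on the first `N` coordinates and dominated by `w` is no longer than the tail
of `w` after `N`.

Let `Y` be a closed sublattice. On the coordinates where `Y` does not vanish identically,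
"`c i` and `c j` are proportional on `Y`" is an equivalence relation. Solving a 2×2 system in
`Y` and taking a positive part separates a coordinate `n` from any non-proportional `j` by a
positive `p ∈ Y` with `c n p = 1`, `c j p = 0`. Starting from `w = |y|` with `c n y ≠ 0`, the
infima of `w` with multiples of these `p` form an order-bounded sequence whose coordinates
stabilise, hence a Cauchy sequence; its limit is an atom of `Y` supported exactly on the class
of `n`. Atoms of distinct classes are disjoint, and every `y ∈ Y` is `∑ c r y • D r` over the
least elements `r` of the classes, the errors of the partial sums being dominated by the tails
of `y`.

Conversely, if the `d i` are positive and disjoint, at each coordinate at most one of them is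
nonzero, so `(∑ aᵢ • dᵢ) ⊔ 0 = ∑ (aᵢ ⊔ 0) • dᵢ`: the span is a sublattice, hence so is its
closure.
-/

open Filter Finset Topology

section LatticeFacts

variable {G : Type*} [AddCommGroup G] [Lattice G] [IsOrderedAddMonoid G]

lemma AddSubgroup.infClosed_of_supClosed (H : AddSubgroup G) (hH : SupClosed (H : Set G)) :
    InfClosed (H : Set G) := fun x hx y hy => by
  rw [← neg_neg (x ⊓ y), _root_.neg_inf]
  exact H.neg_mem (hH (H.neg_mem hx) (H.neg_mem hy))

lemma AddSubgroup.supClosed_of_sup_zero_mem (H : AddSubgroup G) (hH : ∀ x ∈ H, x ⊔ 0 ∈ H) :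
    SupClosed (H : Set G) := fun x hx y hy => by
  have hxy : x ⊔ y = (x - y) ⊔ 0 + y := by rw [sup_add, sub_add_cancel, zero_add]
  rw [hxy]
  exact H.add_mem (hH _ (H.sub_mem hx hy)) hy

end LatticeFacts

lemma SupClosed.closure {α : Type*} [TopologicalSpace α] [Lattice α] [ContinuousSup α]
    {s : Set α} (hs : SupClosed s) : SupClosed (closure s) := fun _ hx _ hy =>
  map_mem_closure₂ continuous_sup hx hy fun _ ha _ hb => hs ha hb

lemma max_sum_mul_zero_of_pairwise {ι R : Type*} [CommRing R] [LinearOrder R] [IsOrderedRing R]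
    {s : Finset ι} {a g : ι → R} (hg : ∀ i ∈ s, 0 ≤ g i)
    (hdisj : ∀ i ∈ s, ∀ j ∈ s, i ≠ j → g i = 0 ∨ g j = 0) :
    max (∑ i ∈ s, a i * g i) 0 = ∑ i ∈ s, max (a i) 0 * g i := by
  by_cases h : ∃ i ∈ s, g i ≠ 0
  · obtain ⟨i, hi, hgi⟩ := h
    have hzero : ∀ j ∈ s, j ≠ i → g j = 0 := fun j hj hji =>
      (hdisj j hj i hi hji).resolve_right hgi
    rw [sum_eq_single_of_mem i hi fun j hj hji => by rw [hzero j hj hji, mul_zero],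
      sum_eq_single_of_mem i hi fun j hj hji => by rw [hzero j hj hji, mul_zero],
      max_mul_of_nonneg _ _ (hg i hi), zero_mul]
  · push Not at h
    rw [sum_eq_zero fun i hi => by rw [h i hi, mul_zero],
      sum_eq_zero fun i hi => by rw [h i hi, mul_zero], max_self]

section SeqInf

variable {α : Type*} [SemilatticeInf α]

def seqInf (w : α) (r : ℕ → α) : ℕ → α
  | 0 => w
  | N + 1 => seqInf w r N ⊓ r N

lemma seqInf_le_self (w : α) (r : ℕ → α) : ∀ N, seqInf w r N ≤ w
  | 0 => le_rfl
  | N + 1 => inf_le_left.trans (seqInf_le_self w r N)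

lemma seqInf_le_of_lt (w : α) (r : ℕ → α) {j : ℕ} : ∀ {N}, j < N → seqInf w r N ≤ r j
  | N + 1, h => by
    rcases Nat.lt_succ_iff_lt_or_eq.1 h with h | rfl
    · exact inf_le_left.trans (seqInf_le_of_lt w r h)
    · exact inf_le_right

lemma le_seqInf {a w : α} {r : ℕ → α} (hw : a ≤ w) (hr : ∀ j, a ≤ r j) : ∀ N, a ≤ seqInf w r N
  | 0 => hw
  | N + 1 => le_inf (le_seqInf hw hr N) (hr N)

lemma InfClosed.seqInf_mem {s : Set α} (hs : InfClosed s) {w : α} {r : ℕ → α} (hw : w ∈ s)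
    (hr : ∀ j, r j ∈ s) : ∀ N, seqInf w r N ∈ s
  | 0 => hw
  | N + 1 => hs (hs.seqInf_mem hw hr N) (hr N)

end SeqInf

section BasisCoordinates

variable {X : Type*} [NormedAddCommGroup X] [NormedSpace ℝ X] {c : ℕ → X →L[ℝ] ℝ} {e : ℕ → X}

lemma eq_of_forall_coord_eq
    (hbasis : ∀ x, Tendsto (fun n => ∑ i ∈ range n, c i x • e i) atTop (𝓝 x))
    {x y : X} (h : ∀ i, c i x = c i y) : x = y := by
  have hx := hbasis x
  simp only [h] at hx
  exact tendsto_nhds_unique hx (hbasis y)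

lemma tendsto_norm_tail (hbasis : ∀ x, Tendsto (fun n => ∑ i ∈ range n, c i x • e i) atTop (𝓝 x))
    (w : X) : Tendsto (fun N => ‖w - ∑ i ∈ range N, c i w • e i‖) atTop (𝓝 0) := by
  simpa using (tendsto_const_nhds (x := w)).sub (hbasis w) |>.norm

lemma coord_sum_range (huniq : ∀ i j, c i (e j) = if i = j then 1 else 0) (x : X) (N j : ℕ) :
    c j (∑ i ∈ range N, c i x • e i) = if j < N then c j x else 0 := by
  simp [map_sum, huniq, mem_range]

def coordSupport (c : ℕ → X →L[ℝ] ℝ) (Y : Submodule ℝ X) : Set ℕ :=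
  {i | ∃ y ∈ Y, c i y ≠ 0}

def CoordProportional (c : ℕ → X →L[ℝ] ℝ) (Y : Submodule ℝ X) (i j : ℕ) : Prop :=
  ∀ y ∈ Y, ∀ z ∈ Y, c i y * c j z = c i z * c j y

/-- Intended: `D r` is the atom of the proportionality class of `l`, indexed by its least
element `r`; `r ≤ l` makes the partial sums `∑ n < N, c n y • D n` exact below `N`. -/
def IsCoordAtoms (c : ℕ → X →L[ℝ] ℝ) (Y : Submodule ℝ X) (D : ℕ → X) : Prop :=
  ∀ l, ∃ r ≤ l, (∀ m ≠ r, c l (D m) = 0) ∧ ∀ y ∈ Y, c l y = c r y * c l (D r)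

variable {Y : Submodule ℝ X}

lemma CoordProportional.refl (i : ℕ) : CoordProportional c Y i i :=
  fun _ _ _ _ => mul_comm _ _

lemma CoordProportional.symm {i j : ℕ} (h : CoordProportional c Y i j) :
    CoordProportional c Y j i := fun y hy z hz => by
  linarith [h z hz y hy]

lemma CoordProportional.trans {i j k : ℕ} (hj : j ∈ coordSupport c Y)
    (hij : CoordProportional c Y i j) (hjk : CoordProportional c Y j k) :
    CoordProportional c Y i k := fun y hy z hz => by
  obtain ⟨u, hu, hju⟩ := hj
  refine mul_right_cancel₀ (pow_ne_zero 2 hju) ?_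
  linear_combination (c j u * c k z) * hij y hy u hu + (c i u * c j y) * hjk u hu z hz
    - (c j u * c k y) * hij z hz u hu - (c i u * c j z) * hjk u hu y hy

def IsClassLeader (c : ℕ → X →L[ℝ] ℝ) (Y : Submodule ℝ X) (n : ℕ) : Prop :=
  n ∈ coordSupport c Y ∧ ∀ m < n, m ∈ coordSupport c Y → ¬ CoordProportional c Y m n

lemma exists_isClassLeader {l : ℕ} (hl : l ∈ coordSupport c Y) :
    ∃ r ≤ l, IsClassLeader c Y r ∧ CoordProportional c Y r l ∧
      ∀ m, IsClassLeader c Y m → CoordProportional c Y m l → m = r := by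
  classical
  have hex : ∃ m, m ∈ coordSupport c Y ∧ CoordProportional c Y m l :=
    ⟨l, hl, CoordProportional.refl l⟩
  obtain ⟨hr, hrl⟩ := Nat.find_spec hex
  refine ⟨Nat.find hex, Nat.find_min' hex ⟨hl, CoordProportional.refl l⟩,
    ⟨hr, fun m hm hms hmr => Nat.find_min hex hm ⟨hms, hmr.trans hr hrl⟩⟩, hrl,
    fun m hm hml => ?_⟩
  by_contra hmr
  exact hm.2 _ ((Nat.find_min' hex ⟨hm.1, hml⟩).lt_of_ne (Ne.symm hmr)) hr
    (hrl.trans hl hml.symm)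

variable [Lattice X]

lemma smul_nonneg_of_coord (horder : ∀ x : X, 0 ≤ x ↔ ∀ i, 0 ≤ c i x) {t : ℝ} {x : X}
    (ht : 0 ≤ t) (hx : 0 ≤ x) : 0 ≤ t • x :=
  (horder _).2 fun i => by
    rw [map_smul, smul_eq_mul]
    exact mul_nonneg ht ((horder x).1 hx i)

variable [IsOrderedAddMonoid X]

lemma le_iff_forall_coord_le (horder : ∀ x : X, 0 ≤ x ↔ ∀ i, 0 ≤ c i x) {x y : X} :
    x ≤ y ↔ ∀ i, c i x ≤ c i y := by
  simp only [← sub_nonneg (b := x), horder, map_sub, sub_nonneg]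

/-- The element `x ⊓ y + t • e i`, with `t` the defect at coordinate `i`, is a lower bound of
`x` and `y`, so `t ≤ 0`. -/
lemma coord_inf (huniq : ∀ i j, c i (e j) = if i = j then 1 else 0)
    (horder : ∀ x : X, 0 ≤ x ↔ ∀ i, 0 ≤ c i x) (x y : X) (i : ℕ) :
    c i (x ⊓ y) = min (c i x) (c i y) := by
  set t := min (c i x) (c i y) - c i (x ⊓ y)
  have hcoord : ∀ j, c j (x ⊓ y + t • e i) = c j (x ⊓ y) + if j = i then t else 0 := by
    intro j
    simp [huniq]
  have hbound : ∀ z, x ⊓ y ≤ z → min (c i x) (c i y) ≤ c i z → x ⊓ y + t • e i ≤ z := by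
    intro z hz hiz
    refine (le_iff_forall_coord_le horder).2 fun j => ?_
    rw [hcoord]
    split_ifs with hji
    · subst hji
      linarith
    · simpa using (le_iff_forall_coord_le horder).1 hz j
  have hlow := (le_iff_forall_coord_le horder).1 (le_inf (hbound x inf_le_left
    (min_le_left _ _)) (hbound y inf_le_right (min_le_right _ _))) i
  rw [hcoord, if_pos rfl] at hlow
  have hup := le_min ((le_iff_forall_coord_le horder).1 (inf_le_left : x ⊓ y ≤ x) i)
    ((le_iff_forall_coord_le horder).1 (inf_le_right : x ⊓ y ≤ y) i)
  linarith

lemma coord_sup (huniq : ∀ i j, c i (e j) = if i = j then 1 else 0)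
    (horder : ∀ x : X, 0 ≤ x ↔ ∀ i, 0 ≤ c i x) (x y : X) (i : ℕ) :
    c i (x ⊔ y) = max (c i x) (c i y) := by
  have h := congrArg (c i) (inf_add_sup x y)
  rw [map_add, map_add, coord_inf huniq horder] at h
  linarith [min_add_max (c i x) (c i y)]

lemma coord_abs (huniq : ∀ i j, c i (e j) = if i = j then 1 else 0)
    (horder : ∀ x : X, 0 ≤ x ↔ ∀ i, 0 ≤ c i x) (x : X) (i : ℕ) :
    c i |x| = |c i x| := by
  rw [abs, coord_sup huniq horder, map_neg, abs]

lemma coord_eq_zero_or_of_inf_eq_zero (huniq : ∀ i j, c i (e j) = if i = j then 1 else 0)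
    (horder : ∀ x : X, 0 ≤ x ↔ ∀ i, 0 ≤ c i x) {x y : X} (h : x ⊓ y = 0) (i : ℕ) :
    c i x = 0 ∨ c i y = 0 := by
  have hi := coord_inf huniq horder x y i
  rw [h, map_zero] at hi
  rcases min_choice (c i x) (c i y) with h' | h'
  exacts [Or.inl (h'.symm.trans hi.symm), Or.inr (h'.symm.trans hi.symm)]

lemma coord_seqInf_eq_of_forall_le (huniq : ∀ i j, c i (e j) = if i = j then 1 else 0)
    (horder : ∀ x : X, 0 ≤ x ↔ ∀ i, 0 ≤ c i x) {w : X} {r : ℕ → X} {l : ℕ}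
    (h : ∀ j, c l w ≤ c l (r j)) : ∀ N, c l (seqInf w r N) = c l w
  | 0 => rfl
  | N + 1 => by
    rw [seqInf, coord_inf huniq horder, coord_seqInf_eq_of_forall_le huniq horder h N]
    exact min_eq_left (h N)

lemma exists_nonneg_coord_eq_one_coord_eq_zero
    (huniq : ∀ i j, c i (e j) = if i = j then 1 else 0)
    (horder : ∀ x : X, 0 ≤ x ↔ ∀ i, 0 ≤ c i x) (hY : SupClosed (Y : Set X)) {n j : ℕ}
    (h : ¬ CoordProportional c Y n j) : ∃ p ∈ Y, 0 ≤ p ∧ c n p = 1 ∧ c j p = 0 := by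
  simp only [CoordProportional, not_forall] at h
  obtain ⟨y, hy, z, hz, hyz⟩ := h
  set u := (c n y * c j z - c n z * c j y)⁻¹ • (c j z • y - c j y • z)
  have huY : u ∈ Y := Y.smul_mem _ (Y.sub_mem (Y.smul_mem _ hy) (Y.smul_mem _ hz))
  have hun : c n u = 1 := by
    simp only [u, map_smul, map_sub, smul_eq_mul]
    rw [← inv_mul_cancel₀ (sub_ne_zero.2 hyz)]
    ring
  have huj : c j u = 0 := by
    simp only [u, map_smul, map_sub, smul_eq_mul]
    ring
  refine ⟨u ⊔ 0, hY huY Y.zero_mem, le_sup_right, ?_, ?_⟩ <;>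
    rw [coord_sup huniq horder, map_zero]
  · rw [hun, max_eq_left zero_le_one]
  · rw [huj, max_self]

lemma IsCoordAtoms.pairwise_inf_eq_zero
    (hbasis : ∀ x, Tendsto (fun n => ∑ i ∈ range n, c i x • e i) atTop (𝓝 x))
    (huniq : ∀ i j, c i (e j) = if i = j then 1 else 0)
    (horder : ∀ x : X, 0 ≤ x ↔ ∀ i, 0 ≤ c i x) {D : ℕ → X} (hD0 : ∀ n, 0 ≤ D n)
    (hD : IsCoordAtoms c Y D) : Pairwise fun i j => D i ⊓ D j = 0 := by
  intro i j hij
  refine eq_of_forall_coord_eq hbasis fun l => ?_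
  obtain ⟨r, -, hzero, -⟩ := hD l
  rw [coord_inf huniq horder, map_zero]
  rcases eq_or_ne i r with rfl | hir
  · rw [hzero j (Ne.symm hij), min_eq_right ((horder _).1 (hD0 i) l)]
  · rw [hzero i hir, min_eq_left ((horder _).1 (hD0 j) l)]

/-- In coordinates, `(∑ aᵢ dᵢ) ⊔ 0 = ∑ (aᵢ ⊔ 0) dᵢ` because at each coordinate at most one `dᵢ`
is nonzero. -/
lemma supClosed_span_range
    (hbasis : ∀ x, Tendsto (fun n => ∑ i ∈ range n, c i x • e i) atTop (𝓝 x))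
    (huniq : ∀ i j, c i (e j) = if i = j then 1 else 0)
    (horder : ∀ x : X, 0 ≤ x ↔ ∀ i, 0 ≤ c i x) {d : ℕ → X} (hd0 : ∀ n, 0 ≤ d n)
    (hdisj : Pairwise fun i j => d i ⊓ d j = 0) :
    SupClosed (Submodule.span ℝ (Set.range d) : Set X) := by
  refine AddSubgroup.supClosed_of_sup_zero_mem (Submodule.span ℝ (Set.range d)).toAddSubgroup
    fun u hu => ?_
  obtain ⟨f, rfl⟩ := Finsupp.mem_span_range_iff_exists_finsupp.1 hu
  have hcoord : ∀ (a : ℕ → ℝ) l,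
      c l (∑ i ∈ f.support, a i • d i) = ∑ i ∈ f.support, a i * c l (d i) := fun a l => by
    simp only [map_sum, map_smul, smul_eq_mul]
  have hsup : (f.sum fun i a => a • d i) ⊔ 0 = ∑ i ∈ f.support, max (f i) 0 • d i := by
    refine eq_of_forall_coord_eq hbasis fun l => ?_
    rw [coord_sup huniq horder, map_zero, Finsupp.sum, hcoord, hcoord]
    exact max_sum_mul_zero_of_pairwise (fun i _ => (horder _).1 (hd0 i) l)
      fun i _ j _ hij => coord_eq_zero_or_of_inf_eq_zero huniq horder (hdisj hij) l
  rw [hsup]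
  exact Submodule.sum_mem _ fun i _ => Submodule.smul_mem _ _ (Submodule.subset_span ⟨i, rfl⟩)

variable [HasSolidNorm X]

lemma norm_le_norm_of_forall_abs_coord_le (huniq : ∀ i j, c i (e j) = if i = j then 1 else 0)
    (horder : ∀ x : X, 0 ≤ x ↔ ∀ i, 0 ≤ c i x) {x y : X} (h : ∀ i, |c i x| ≤ |c i y|) :
    ‖x‖ ≤ ‖y‖ :=
  HasSolidNorm.solid <| (le_iff_forall_coord_le horder).2 fun i => by
    simpa only [coord_abs huniq horder] using h i

lemma norm_le_norm_tail (huniq : ∀ i j, c i (e j) = if i = j then 1 else 0)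
    (horder : ∀ x : X, 0 ≤ x ↔ ∀ i, 0 ≤ c i x) {x w : X} {N : ℕ}
    (hx : ∀ i < N, c i x = 0) (hxw : ∀ i, |c i x| ≤ |c i w|) :
    ‖x‖ ≤ ‖w - ∑ i ∈ range N, c i w • e i‖ := by
  refine norm_le_norm_of_forall_abs_coord_le huniq horder fun i => ?_
  rw [map_sub, coord_sum_range huniq]
  split_ifs with hi
  · simp [hx i hi]
  · simpa using hxw i

lemma IsCoordAtoms.eq_closure_span
    (hbasis : ∀ x, Tendsto (fun n => ∑ i ∈ range n, c i x • e i) atTop (𝓝 x))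
    (huniq : ∀ i j, c i (e j) = if i = j then 1 else 0)
    (horder : ∀ x : X, 0 ≤ x ↔ ∀ i, 0 ≤ c i x) (hYc : IsClosed (Y : Set X)) {D : ℕ → X}
    (hDY : ∀ n, D n ∈ Y) (hD : IsCoordAtoms c Y D) :
    (Y : Set X) = closure (Submodule.span ℝ (Set.range D) : Set X) := by
  classical
  refine subset_antisymm (fun y hy => ?_)
    (closure_minimal (Submodule.span_le.2 (Set.range_subset_iff.2 hDY)) hYc)
  set s : ℕ → X := fun N => ∑ n ∈ range N, c n y • D n
  have hs : ∀ l N, c l (s N) = c l y ∨ N ≤ l ∧ c l (s N) = 0 := by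
    intro l N
    obtain ⟨r, hrl, hzero, hyr⟩ := hD l
    have hsum : c l (s N) = if r ∈ range N then c r y * c l (D r) else 0 := by
      simp only [s, map_sum, map_smul, smul_eq_mul]
      rw [← sum_ite_eq' (range N) r fun m => c m y * c l (D m)]
      refine sum_congr rfl fun m _ => ?_
      split_ifs with hm
      · rw [hm]
      · rw [hzero m hm, mul_zero]
    rw [hsum, ← hyr y hy]
    split_ifs with hrN
    · exact Or.inl rfl
    · exact Or.inr ⟨by rw [mem_range] at hrN; omega, rfl⟩
  have hbound : ∀ N, ‖s N - y‖ ≤ ‖y - ∑ i ∈ range N, c i y • e i‖ := fun N => by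
    rw [norm_sub_rev]
    refine norm_le_norm_tail huniq horder (fun l hl => ?_) fun l => ?_
    · rcases hs l N with h | ⟨h, -⟩
      · rw [map_sub, h, sub_self]
      · omega
    · rcases hs l N with h | ⟨-, h⟩ <;> simp [h]
  have hlim : Tendsto s atTop (𝓝 y) := tendsto_iff_norm_sub_tendsto_zero.2 <|
    squeeze_zero (fun _ => norm_nonneg _) hbound (tendsto_norm_tail hbasis y)
  exact mem_closure_of_tendsto hlim <| Eventually.of_forall fun N =>
    Submodule.sum_mem _ fun n _ => Submodule.smul_mem _ _ (Submodule.subset_span ⟨n, rfl⟩)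

variable [CompleteSpace X]

lemma exists_tendsto_of_coord_eventually_eq
    (hbasis : ∀ x, Tendsto (fun n => ∑ i ∈ range n, c i x • e i) atTop (𝓝 x))
    (huniq : ∀ i j, c i (e j) = if i = j then 1 else 0)
    (horder : ∀ x : X, 0 ≤ x ↔ ∀ i, 0 ≤ c i x) {q : ℕ → X} {w : X} {t : ℕ → ℝ}
    (hq0 : ∀ N, 0 ≤ q N) (hqw : ∀ N, q N ≤ w) (ht : ∀ l N, l < N → c l (q N) = t l) :
    ∃ z, Tendsto q atTop (𝓝 z) ∧ ∀ l, c l z = t l := by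
  have hcauchy : CauchySeq q := by
    refine cauchySeq_of_le_tendsto_0 _ (fun M₁ M₂ N h₁ h₂ => ?_) (tendsto_norm_tail hbasis w)
    rw [dist_eq_norm]
    refine norm_le_norm_tail huniq horder (fun l hl => ?_) fun l => ?_
    · rw [map_sub, ht l M₁ (hl.trans_le h₁), ht l M₂ (hl.trans_le h₂), sub_self]
    · have h₁ := (horder _).1 (hq0 M₁) l
      have h₂ := (horder _).1 (hq0 M₂) l
      have h₁w := (le_iff_forall_coord_le horder).1 (hqw M₁) l
      have h₂w := (le_iff_forall_coord_le horder).1 (hqw M₂) l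
      rw [map_sub, abs_sub_le_iff, abs_of_nonneg (h₁.trans h₁w)]
      constructor <;> linarith
  obtain ⟨z, hz⟩ := cauchySeq_tendsto_of_complete hcauchy
  refine ⟨z, hz, fun l => tendsto_nhds_unique (((c l).continuous.tendsto z).comp hz) ?_⟩
  exact tendsto_const_nhds.congr' ((eventually_gt_atTop l).mono fun N hN => (ht l N hN).symm)

/-- `z` is the limit of the decreasing infima `w ⊓ r₀ ⊓ ⋯ ⊓ r_N`, with `r j := w` for `j ∉ S`. -/
lemma exists_mem_coord_eq_zero_on_eq_off
    (hbasis : ∀ x, Tendsto (fun n => ∑ i ∈ range n, c i x • e i) atTop (𝓝 x))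
    (huniq : ∀ i j, c i (e j) = if i = j then 1 else 0)
    (horder : ∀ x : X, 0 ≤ x ↔ ∀ i, 0 ≤ c i x) (hYc : IsClosed (Y : Set X))
    (hYinf : InfClosed (Y : Set X)) {w : X} (hwY : w ∈ Y) (hw0 : 0 ≤ w) (S : Set ℕ)
    (hS : ∀ j ∈ S, ∃ r ∈ Y, 0 ≤ r ∧ c j r = 0 ∧ ∀ l ∉ S, c l w ≤ c l r) :
    ∃ z ∈ Y, 0 ≤ z ∧ (∀ l ∈ S, c l z = 0) ∧ ∀ l ∉ S, c l z = c l w := by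
  classical
  choose! r hrY hr0 hrS hrw using hS
  set r' : ℕ → X := fun j => if j ∈ S then r j else w
  have hr'Y : ∀ j, r' j ∈ Y := fun j => by
    simp only [r']
    split_ifs with hj
    exacts [hrY j hj, hwY]
  have hr'0 : ∀ j, 0 ≤ r' j := fun j => by
    simp only [r']
    split_ifs with hj
    exacts [hr0 j hj, hw0]
  have hcoord : ∀ l N, l < N → c l (seqInf w r' N) = if l ∈ S then 0 else c l w := by
    intro l N hlN
    split_ifs with hl
    · refine le_antisymm ?_ ((horder _).1 (le_seqInf hw0 hr'0 N) l)
      simpa [r', hl, hrS l hl] using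
        (le_iff_forall_coord_le horder).1 (seqInf_le_of_lt w r' hlN) l
    · refine coord_seqInf_eq_of_forall_le huniq horder (fun j => ?_) N
      simp only [r']
      split_ifs with hj
      exacts [hrw j hj l hl, le_rfl]
  obtain ⟨z, hz, hzc⟩ := exists_tendsto_of_coord_eventually_eq hbasis huniq horder
    (le_seqInf hw0 hr'0) (seqInf_le_self w r') hcoord
  refine ⟨z, hYc.mem_of_tendsto hz (Eventually.of_forall (hYinf.seqInf_mem hwY hr'Y)),
    (horder z).2 fun l => ?_, fun l hl => by simpa [hl] using hzc l,
    fun l hl => by simpa [hl] using hzc l⟩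
  rw [hzc]
  split_ifs
  exacts [le_rfl, (horder w).1 hw0 l]

lemma exists_atom
    (hbasis : ∀ x, Tendsto (fun n => ∑ i ∈ range n, c i x • e i) atTop (𝓝 x))
    (huniq : ∀ i j, c i (e j) = if i = j then 1 else 0)
    (horder : ∀ x : X, 0 ≤ x ↔ ∀ i, 0 ≤ c i x) (hYc : IsClosed (Y : Set X))
    (hYsup : SupClosed (Y : Set X)) {n : ℕ} (hn : n ∈ coordSupport c Y) :
    ∃ d ∈ Y, 0 ≤ d ∧ c n d = 1 ∧ ∀ l, ¬ CoordProportional c Y n l → c l d = 0 := by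
  obtain ⟨y, hy, hyn⟩ := hn
  have habsY : |y| ∈ Y := hYsup hy (Y.neg_mem hy)
  have habs_pos : 0 < c n |y| := by
    rw [coord_abs huniq horder]
    exact abs_pos.2 hyn
  obtain ⟨z, hzY, hz0, hzS, hz⟩ := exists_mem_coord_eq_zero_on_eq_off hbasis huniq horder hYc
    (Y.toAddSubgroup.infClosed_of_supClosed hYsup) habsY (abs_nonneg y)
    {l | ¬ CoordProportional c Y n l} fun j hj => by
      obtain ⟨p, hpY, hp0, hpn, hpj⟩ :=
        exists_nonneg_coord_eq_one_coord_eq_zero huniq horder hYsup hj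
      refine ⟨c n |y| • p, Y.smul_mem _ hpY, smul_nonneg_of_coord horder habs_pos.le hp0,
        by simp [hpj], fun l hl => ?_⟩
      have hprop := (not_not.1 hl) |y| habsY p hpY
      rw [hpn, one_mul] at hprop
      rw [map_smul, smul_eq_mul, hprop]
  refine ⟨(c n |y|)⁻¹ • z, Y.smul_mem _ hzY,
    smul_nonneg_of_coord horder (inv_nonneg.2 habs_pos.le) hz0, ?_, fun l hl => ?_⟩
  · rw [map_smul, hz n (not_not.2 (CoordProportional.refl n)), smul_eq_mul,
      inv_mul_cancel₀ habs_pos.ne']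
  · rw [map_smul, hzS l hl, smul_zero]

lemma exists_isCoordAtoms
    (hbasis : ∀ x, Tendsto (fun n => ∑ i ∈ range n, c i x • e i) atTop (𝓝 x))
    (huniq : ∀ i j, c i (e j) = if i = j then 1 else 0)
    (horder : ∀ x : X, 0 ≤ x ↔ ∀ i, 0 ≤ c i x) (hYc : IsClosed (Y : Set X))
    (hYsup : SupClosed (Y : Set X)) :
    ∃ D : ℕ → X, (∀ n, D n ∈ Y) ∧ (∀ n, 0 ≤ D n) ∧ IsCoordAtoms c Y D := by
  classical
  choose! d hdY hd0 hdn hdl using fun n (hn : n ∈ coordSupport c Y) =>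
    exists_atom hbasis huniq horder hYc hYsup hn
  set D : ℕ → X := fun n => if IsClassLeader c Y n then d n else 0
  have hDY : ∀ n, D n ∈ Y := fun n => by
    simp only [D]
    split_ifs with hn
    exacts [hdY n hn.1, Y.zero_mem]
  refine ⟨D, hDY, fun n => ?_, fun l => ?_⟩
  · simp only [D]
    split_ifs with hn
    exacts [hd0 n hn.1, le_rfl]
  by_cases hl : l ∈ coordSupport c Y
  · obtain ⟨r, hrl, hr, hprop, hleader⟩ := exists_isClassLeader hl
    refine ⟨r, hrl, fun m hmr => ?_, fun y hy => ?_⟩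
    · simp only [D]
      split_ifs with hm
      exacts [hdl m hm.1 l fun hml => hmr (hleader m hm hml), map_zero _]
    · have hyr := hprop y hy _ (hdY _ hr.1)
      rw [hdn _ hr.1, one_mul] at hyr
      simp only [D, if_pos hr]
      exact hyr.symm
  · have hzero : ∀ y ∈ Y, c l y = 0 := by
      simpa [coordSupport] using hl
    exact ⟨l, le_rfl, fun m _ => hzero _ (hDY m), fun y hy => by
      rw [hzero y hy, hzero _ (hDY l), mul_zero]⟩

end BasisCoordinates

/-- In a Banach sequence space, the closed sublattices are exactly the closed linear spans
of (finite or infinite) disjoint sequences of positive vectors. -/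
theorem stmt8 {X : Type*} [NormedAddCommGroup X] [Lattice X] [HasSolidNorm X]
    [IsOrderedAddMonoid X] [NormedSpace ℝ X] [CompleteSpace X]
    (c : ℕ → (X →L[ℝ] ℝ)) (e : ℕ → X)
    (hbasis : ∀ x : X, Filter.Tendsto
      (fun n => ∑ i ∈ Finset.range n, c i x • e i) Filter.atTop (nhds x))
    (huniq : ∀ i j, c i (e j) = if i = j then 1 else 0)
    (horder : ∀ x : X, 0 ≤ x ↔ ∀ i, 0 ≤ c i x)
    (Y : Submodule ℝ X) :
    (IsClosed (Y : Set X) ∧ ∀ x ∈ Y, ∀ y ∈ Y, x ⊔ y ∈ Y) ↔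
      ∃ d : ℕ → X, (∀ n, 0 ≤ d n) ∧ (Pairwise fun i j => d i ⊓ d j = 0) ∧
        (Y : Set X) = closure (Submodule.span ℝ (Set.range d) : Set X) := by
  constructor
  · rintro ⟨hYc, hYsup⟩
    obtain ⟨D, hDY, hD0, hD⟩ := exists_isCoordAtoms hbasis huniq horder hYc hYsup
    exact ⟨D, hD0, IsCoordAtoms.pairwise_inf_eq_zero hbasis huniq horder hD0 hD,
      IsCoordAtoms.eq_closure_span hbasis huniq horder hYc hDY hD⟩
  · rintro ⟨d, hd0, hdisj, hY⟩
    have hYsup : SupClosed (Y : Set X) := by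
      rw [hY]
      exact (supClosed_span_range hbasis huniq horder hd0 hdisj).closure
    exact ⟨hY ▸ isClosed_closure, fun x hx y hy => hYsup hx hy⟩
end

section
/- Every uniformly closed subspace of finite codimension in an Archimedean vector lattice equals the intersection of the kernels of finitely many order bounded linear functionals; in particular it is an intersection of uniformly closed subspaces of codimension one. -/
/-!
Let `Q : X → ℝᵏ` be the quotient map by `Y` followed by a choice of coordinates. Each coordinate
of `Q` is order bounded: otherwise there are `xₙ` with `|xₙ| ≤ e` and `‖Q xₙ‖ ≥ n`, and the
normalised `yₙ = ‖Q xₙ‖⁻¹ • xₙ` tend to `0` relatively uniformly while, along a subsequence,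
`Q yₙ → v` on the unit sphere. If `t` is a linear section of `Q`, then `yₙ - t (Q yₙ) ∈ Y`
converges relatively uniformly to `-t v`, so `-t v ∈ Y` since `Y` is uniformly closed, forcing
`v = Q (t v) = 0`.
-/

/-- Relative uniform convergence closedness: `A` is uniformly closed if it contains the
limit of every sequence in `A` that converges relatively uniformly (with regulator `e`). -/
def RUClosed {X : Type*} [AddCommGroup X] [Lattice X] [Module ℝ X] (A : Set X) : Prop :=
  ∀ (x : X) (a : ℕ → X) (e : X), 0 ≤ e → (∀ n, a n ∈ A) →
    (∀ ε : ℝ, 0 < ε → ∃ N, ∀ n ≥ N, |a n - x| ≤ ε • e) → x ∈ A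

/-- A linear functional is order bounded if it is bounded on every order interval. -/
def OrderBoundedFunc {X : Type*} [AddCommGroup X] [Lattice X] [Module ℝ X]
    (φ : X →ₗ[ℝ] ℝ) : Prop :=
  ∀ a b : X, ∃ M : ℝ, ∀ x : X, a ≤ x → x ≤ b → |φ x| ≤ M

/-- A submodule is a (vector) sublattice if it is closed under finite suprema. -/
def IsVectorSublattice {X : Type*} [AddCommGroup X] [Lattice X] [Module ℝ X]
    (Y : Submodule ℝ X) : Prop :=
  ∀ x ∈ Y, ∀ y ∈ Y, x ⊔ y ∈ Y

/-- A submodule is an order ideal if it is solid. -/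
def IsOrderIdeal {X : Type*} [AddCommGroup X] [Lattice X] [Module ℝ X]
    (J : Submodule ℝ X) : Prop :=
  ∀ x y : X, |x| ≤ |y| → y ∈ J → x ∈ J

/-- The Archimedean property for a vector lattice. -/
def ArchimedeanVL (X : Type*) [AddCommGroup X] [Lattice X] [Module ℝ X] : Prop :=
  ∀ x y : X, 0 ≤ x → (∀ n : ℕ, n • x ≤ y) → x = 0

open Filter Topology

section VectorLattice

variable {X : Type*} [AddCommGroup X] [Lattice X]

theorem abs_smul_le_smul_abs {R : Type*} [Ring R] [LinearOrder R] [IsOrderedRing R] [Module R X]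
    [PosSMulMono R X] (a : R) (x : X) : |a • x| ≤ |a| • |x| := by
  have key : ∀ c : R, 0 ≤ c → ∀ y : X, |c • y| ≤ c • |y| := fun c hc y =>
    abs_le'.2 ⟨smul_le_smul_of_nonneg_left (le_abs_self y) hc,
      by rw [← smul_neg]; exact smul_le_smul_of_nonneg_left (neg_le_abs y) hc⟩
  rcases le_total 0 a with ha | ha
  · rw [abs_of_nonneg ha]; exact key a ha x
  · rw [abs_of_nonpos ha, ← abs_neg x, ← neg_smul_neg]; exact key (-a) (neg_nonneg.2 ha) (-x)

section OrderedAddGroup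

variable [IsOrderedAddMonoid X]

theorem abs_le_sup_abs_abs {a b x : X} (hax : a ≤ x) (hxb : x ≤ b) :
    |x| ≤ |a| ⊔ |b| :=
  abs_le'.2 ⟨hxb.trans ((le_abs_self b).trans le_sup_right),
    (neg_le_neg hax).trans ((neg_le_abs a).trans le_sup_left)⟩

end OrderedAddGroup

variable [Module ℝ X]

def RUTendsto (a : ℕ → X) (x e : X) : Prop :=
  ∀ ε : ℝ, 0 < ε → ∀ᶠ n in atTop, |a n - x| ≤ ε • e

theorem RUClosed.mem_of_ruTendsto {A : Set X} (hA : RUClosed A) {a : ℕ → X} {x e : X}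
    (he : 0 ≤ e) (ha : ∀ n, a n ∈ A) (h : RUTendsto a x e) : x ∈ A :=
  hA x a e he ha fun ε hε => eventually_atTop.1 (h ε hε)

variable [IsOrderedAddMonoid X]

theorem orderBoundedFunc_of_forall_abs_le (φ : X →ₗ[ℝ] ℝ)
    (h : ∀ e : X, 0 ≤ e → ∃ M : ℝ, ∀ x, |x| ≤ e → |φ x| ≤ M) : OrderBoundedFunc φ := by
  intro a b
  obtain ⟨M, hM⟩ := h (|a| ⊔ |b|) ((abs_nonneg a).trans le_sup_left)
  exact ⟨M, fun x hax hxb => hM x (abs_le_sup_abs_abs hax hxb)⟩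

theorem RUTendsto.sub {a b : ℕ → X} {x y e f : X} (ha : RUTendsto a x e) (hb : RUTendsto b y f) :
    RUTendsto (a - b) (x - y) (e + f) := fun ε hε => by
  filter_upwards [ha ε hε, hb ε hε] with n han hbn
  calc |(a - b) n - (x - y)| = |(a n - x) + -(b n - y)| := by simp only [Pi.sub_apply]; abel_nf
    _ ≤ |a n - x| + |b n - y| := by rw [← abs_neg (b n - y)]; exact abs_add_le _ _
    _ ≤ ε • (e + f) := by rw [smul_add]; exact add_le_add han hbn

variable [PosSMulMono ℝ X]

theorem ruTendsto_zero_of_abs_le_smul {a : ℕ → X} {e : X} (he : 0 ≤ e) {r : ℕ → ℝ}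
    (hr : Tendsto r atTop (𝓝 0)) (h : ∀ n, |a n| ≤ r n • e) : RUTendsto a 0 e := fun ε hε => by
  filter_upwards [hr.eventually (ge_mem_nhds hε)] with n hn
  rw [sub_zero]
  exact (h n).trans (smul_le_smul_of_nonneg_right hn he)

theorem LinearMap.exists_abs_apply_le_norm_smul {ι : Type*} [Fintype ι] (t : (ι → ℝ) →ₗ[ℝ] X) :
    ∃ f : X, 0 ≤ f ∧ ∀ c : ι → ℝ, |t c| ≤ ‖c‖ • f := by
  classical
  set u : ι → X := fun i => t (fun j => if i = j then 1 else 0)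
  refine ⟨∑ i, |u i|, Finset.sum_nonneg fun i _ => abs_nonneg _, fun c => ?_⟩
  rw [t.pi_apply_eq_sum_univ, Finset.smul_sum]
  refine (Finset.le_sum_of_subadditive _ abs_zero.le abs_add_le _ _).trans
    (Finset.sum_le_sum fun i _ => ?_)
  calc |c i • u i| ≤ |c i| • |u i| := abs_smul_le_smul_abs _ _
    _ ≤ ‖c‖ • |u i| := smul_le_smul_of_nonneg_right (norm_le_pi_norm c i) (abs_nonneg _)

theorem LinearMap.exists_ruTendsto_of_tendsto {ι : Type*} [Fintype ι] (t : (ι → ℝ) →ₗ[ℝ] X)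
    {c : ℕ → ι → ℝ} {v : ι → ℝ} (hc : Tendsto c atTop (𝓝 v)) :
    ∃ f : X, 0 ≤ f ∧ RUTendsto (t ∘ c) (t v) f := by
  obtain ⟨f, hf, htf⟩ := t.exists_abs_apply_le_norm_smul
  have := ruTendsto_zero_of_abs_le_smul hf (tendsto_iff_norm_sub_tendsto_zero.1 hc)
    fun n => htf (c n - v)
  refine ⟨f, hf, fun ε hε => (this ε hε).mono fun n hn => ?_⟩
  simpa only [Function.comp_apply, map_sub, sub_zero] using hn

theorem LinearMap.exists_norm_le_of_abs_le_of_ruClosed_ker {ι : Type*} [Fintype ι]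
    (Q : X →ₗ[ℝ] ι → ℝ) (hQ : Function.Surjective Q) (hker : RUClosed (Q.ker : Set X))
    {e : X} (he : 0 ≤ e) : ∃ M : ℝ, ∀ x, |x| ≤ e → ‖Q x‖ ≤ M := by
  obtain ⟨t, ht⟩ := Q.exists_rightInverse_of_surjective (LinearMap.range_eq_top.2 hQ)
  have hQt : ∀ v, Q (t v) = v := LinearMap.congr_fun ht
  by_contra! hunbdd
  choose x hxe hxQ using fun n : ℕ => hunbdd n
  have hpos : ∀ n, 0 < ‖Q (x n)‖ := fun n => (Nat.cast_nonneg n).trans_lt (hxQ n)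
  set y : ℕ → X := fun n => ‖Q (x n)‖⁻¹ • x n
  have hQy : ∀ n, Q (y n) ∈ Metric.sphere 0 1 := fun n => by
    simp only [y, mem_sphere_zero_iff_norm, map_smul, norm_smul, norm_inv, norm_norm]
    exact inv_mul_cancel₀ (hpos n).ne'
  obtain ⟨v, hv, g, hg, hlim⟩ := (isCompact_sphere (0 : ι → ℝ) 1).tendsto_subseq hQy
  have hy : RUTendsto (y ∘ g) 0 e := by
    refine ruTendsto_zero_of_abs_le_smul he (r := fun j => ‖Q (x (g j))‖⁻¹)
      (tendsto_inv_atTop_zero.comp <| tendsto_atTop_mono (fun j => (hxQ (g j)).le)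
        (tendsto_natCast_atTop_atTop.comp hg.tendsto_atTop)) fun j => ?_
    calc |y (g j)| ≤ |‖Q (x (g j))‖⁻¹| • |x (g j)| := abs_smul_le_smul_abs _ _
      _ ≤ ‖Q (x (g j))‖⁻¹ • e := by
        rw [abs_of_pos (inv_pos.2 (hpos _))]
        exact smul_le_smul_of_nonneg_left (hxe _) (inv_pos.2 (hpos _)).le
  obtain ⟨f, hf, htv⟩ := t.exists_ruTendsto_of_tendsto hlim
  have hmem : 0 - t v ∈ Q.ker :=
    hker.mem_of_ruTendsto (add_nonneg he hf) (fun j => by simp [hQt]) (hy.sub htv)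
  have hv0 : v = 0 := by simpa [hQt] using hmem
  simp [hv0] at hv

end VectorLattice

theorem stmt12_general {X : Type*} [AddCommGroup X] [Lattice X]
    [CovariantClass X X (· + ·) (· ≤ ·)] [Module ℝ X] [PosSMulMono ℝ X] (Y : Submodule ℝ X)
    (hY : RUClosed (Y : Set X)) (hfin : FiniteDimensional ℝ (X ⧸ Y)) :
    ∃ (k : ℕ) (φ : Fin k → (X →ₗ[ℝ] ℝ)),
      (∀ i, OrderBoundedFunc (φ i)) ∧ Y = ⨅ i, LinearMap.ker (φ i) := by
  have : IsOrderedAddMonoid X :=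
    { add_le_add_left := fun a b h c => by
        rw [add_comm a, add_comm b]; exact CovariantClass.elim c h }
  let b := Module.finBasis ℝ (X ⧸ Y)
  let Q : X →ₗ[ℝ] Fin _ → ℝ := b.equivFun.toLinearMap ∘ₗ Y.mkQ
  have hker : Q.ker = Y := by rw [LinearEquiv.ker_comp, Submodule.ker_mkQ]
  have hQ : Function.Surjective Q := b.equivFun.surjective.comp Y.mkQ_surjective
  refine ⟨_, fun i => LinearMap.proj i ∘ₗ Q, fun i => ?_, ?_⟩
  · refine orderBoundedFunc_of_forall_abs_le _ fun e he => ?_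
    obtain ⟨M, hM⟩ := Q.exists_norm_le_of_abs_le_of_ruClosed_ker hQ (by rwa [hker]) he
    exact ⟨M, fun x hx => (norm_le_pi_norm (Q x) i).trans (hM x hx)⟩
  · rw [← LinearMap.ker_pi, ← LinearMap.pi_comp, LinearMap.pi_proj, LinearMap.id_comp, hker]

theorem stmt12 {X : Type*} [AddCommGroup X] [Lattice X]
    [CovariantClass X X (· + ·) (· ≤ ·)] [Module ℝ X] [PosSMulMono ℝ X] (hArch : ArchimedeanVL X) (Y : Submodule ℝ X)
    (hY : RUClosed (Y : Set X)) (hfin : FiniteDimensional ℝ (X ⧸ Y)) :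
    ∃ (k : ℕ) (φ : Fin k → (X →ₗ[ℝ] ℝ)),
      (∀ i, OrderBoundedFunc (φ i)) ∧ Y = ⨅ i, LinearMap.ker (φ i) :=
  stmt12_general Y hY hfin
end
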